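/- Fix d ≥ 1 and strictly positive reals Φ_0, Φ_1, …, Φ_d, and define the kernel k₀ on {0,1}^d by k₀(x, y) = Σ_{T ⊆ Fin d} Φ_{|T|} · w_T(x) · w_T(y). Let H be a subgroup of Perm(Fin d), acting on {0,1}^d by coordinate permutation, and define k(x, y) = (1/|H|²) Σ_{σ₁ ∈ H} Σ_{σ₂ ∈ H} k₀(x ∘ σ₁, y ∘ σ₂). Then for all x, y ∈ {0,1}^d: k(x, y) = (k(x, x) + k(y, y))/2 if and only if there exists σ ∈ H with x ∘ σ = y. -/

import Mathlib

/-!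
With the orbit sums `S_T(u) = ∑_{σ ∈ H} w_T(u ∘ σ)` the kernel diagonalises as
`k(u, v) = |H|⁻² ∑_T Φ_{|T|} S_T(u) S_T(v)`, so `k(x, x) + k(y, y) - 2 k(x, y)` is the positive
combination `|H|⁻² ∑_T Φ_{|T|} (S_T(x) - S_T(y))²`, which vanishes iff `S_T(x) = S_T(y)` for all `T`.
The orbit sums are `H`-invariant, and by orthogonality of the Walsh functions
`∑_T S_T(u) w_T(v) = 2^d · #{σ ∈ H | u ∘ σ = v}`. So if they agree at `x` and `y`, then as many
`σ ∈ H` map `x` to `y` as fix `y`, and the identity fixes `y`.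
-/

open scoped Classical

/-- The Walsh function `w_T` on the Boolean cube `{0,1}^d`. -/
def walsh {d : ℕ} (T : Finset (Fin d)) (x : Fin d → ZMod 2) : ℝ :=
  (-1 : ℝ) ^ (T.filter (fun t => x t = 1)).card

open Finset

theorem sum_mul_mul_eq_half_add_iff {ι : Type*} [Fintype ι] {a : ι → ℝ} (ha : ∀ i, 0 < a i)
    (f g : ι → ℝ) :
    ∑ i, a i * f i * g i = (∑ i, a i * f i * f i + ∑ i, a i * g i * g i) / 2 ↔
      ∀ i, f i = g i := by
  have hsq : (∑ i, a i * f i * f i + ∑ i, a i * g i * g i) / 2 - ∑ i, a i * f i * g i =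
      (∑ i, a i * (f i - g i) ^ 2) / 2 := by
    simp only [← sum_add_distrib, ← sum_sub_distrib, sum_div]
    exact sum_congr rfl fun i _ => by ring
  rw [eq_comm, ← sub_eq_zero, hsq, div_eq_zero_iff, or_iff_left two_ne_zero,
    sum_eq_zero_iff_of_nonneg fun i _ => by have := ha i; positivity]
  simp [(ha _).ne', sub_eq_zero]

section walsh

variable {d : ℕ}

theorem walsh_eq_prod (T : Finset (Fin d)) (x : Fin d → ZMod 2) :
    walsh T x = ∏ t ∈ T, (-1 : ℝ) ^ (x t).val := by
  rw [walsh, prod_pow_eq_pow_sum, card_filter]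
  congr 1
  exact sum_congr rfl fun t _ => by generalize x t = a; fin_cases a <;> rfl

theorem walsh_add (T : Finset (Fin d)) (x y : Fin d → ZMod 2) :
    walsh T (x + y) = walsh T x * walsh T y := by
  simp only [walsh_eq_prod, ← prod_mul_distrib, Pi.add_apply]
  refine prod_congr rfl fun t _ => ?_
  rw [← pow_add, ZMod.val_add, neg_one_pow_eq_pow_mod_two, Nat.mod_mod_of_dvd _ dvd_rfl,
    ← neg_one_pow_eq_pow_mod_two]

theorem sum_walsh_eq_ite (z : Fin d → ZMod 2) :
    ∑ T : Finset (Fin d), walsh T z = if z = 0 then 2 ^ d else 0 := by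
  rw [← powerset_univ]
  simp_rw [walsh_eq_prod, ← prod_one_add]
  split_ifs with hz
  · simp [hz, one_add_one_eq_two]
  · obtain ⟨i, hi⟩ : ∃ i, z i ≠ 0 := by simpa [funext_iff] using hz
    have hval : (z i).val = 1 := by
      have := ZMod.val_lt (z i)
      have := (ZMod.val_ne_zero (z i)).mpr hi
      omega
    exact prod_eq_zero (mem_univ i) (by simp [hval])

theorem sum_walsh_mul_walsh_eq_ite (u v : Fin d → ZMod 2) :
    ∑ T : Finset (Fin d), walsh T u * walsh T v = if u = v then 2 ^ d else 0 := by
  simp_rw [← walsh_add, sum_walsh_eq_ite, add_eq_zero_iff_eq_neg, ZModModule.neg_eq_self]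

end walsh

section orbitSum

variable {d : ℕ} (H : Subgroup (Equiv.Perm (Fin d)))

noncomputable def walshOrbitSum (T : Finset (Fin d)) (u : Fin d → ZMod 2) : ℝ :=
  ∑ σ : H, walsh T (u ∘ ⇑(σ : Equiv.Perm (Fin d)))

theorem walshOrbitSum_comp {σ : Equiv.Perm (Fin d)} (hσ : σ ∈ H) (T : Finset (Fin d))
    (u : Fin d → ZMod 2) : walshOrbitSum H T (u ∘ σ) = walshOrbitSum H T u := by
  refine Fintype.sum_equiv (Equiv.mulLeft ⟨σ, hσ⟩) _ _ fun _ => ?_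
  simp [Function.comp_assoc, Equiv.Perm.coe_mul]

theorem sum_walshOrbitSum_mul_walsh (u v : Fin d → ZMod 2) :
    ∑ T : Finset (Fin d), walshOrbitSum H T u * walsh T v =
      2 ^ d * #{σ : H | u ∘ ⇑(σ : Equiv.Perm (Fin d)) = v} := by
  simp_rw [walshOrbitSum, sum_mul]
  rw [sum_comm]
  simp_rw [sum_walsh_mul_walsh_eq_ite, ← sum_filter, sum_const, nsmul_eq_mul, mul_comm]

theorem walshOrbitSum_eq_iff (x y : Fin d → ZMod 2) :
    (∀ T, walshOrbitSum H T x = walshOrbitSum H T y) ↔ ∃ σ ∈ H, x ∘ ⇑σ = y := by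
  refine ⟨fun h => ?_, fun ⟨σ, hσ, hxy⟩ T => hxy ▸ (walshOrbitSum_comp H hσ T x).symm⟩
  have hcount : #{σ : H | x ∘ ⇑(σ : Equiv.Perm (Fin d)) = y} =
      #{σ : H | y ∘ ⇑(σ : Equiv.Perm (Fin d)) = y} := by
    have h2d := sum_walshOrbitSum_mul_walsh H x y
    simp_rw [h, sum_walshOrbitSum_mul_walsh] at h2d
    exact_mod_cast (mul_left_cancel₀ (by positivity) h2d).symm
  obtain ⟨σ, hσ⟩ : ({σ : H | x ∘ ⇑(σ : Equiv.Perm (Fin d)) = y} : Finset H).Nonempty := by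
    rw [← card_pos, hcount, card_pos]
    exact ⟨1, by simp⟩
  exact ⟨σ, σ.2, (mem_filter.mp hσ).2⟩

end orbitSum

theorem stmt15_general (d : ℕ) (Φ : ℕ → ℝ) (hΦ : ∀ j ≤ d, 0 < Φ j)
    (H : Subgroup (Equiv.Perm (Fin d))) (x y : Fin d → ZMod 2) :
    let k₀ : (Fin d → ZMod 2) → (Fin d → ZMod 2) → ℝ := fun x y =>
      ∑ T : Finset (Fin d), Φ T.card * walsh T x * walsh T y
    let k : (Fin d → ZMod 2) → (Fin d → ZMod 2) → ℝ := fun x y =>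
      (1 / (Fintype.card H : ℝ) ^ 2) *
        ∑ σ₁ : H, ∑ σ₂ : H,
          k₀ (x ∘ ⇑(σ₁ : Equiv.Perm (Fin d))) (y ∘ ⇑(σ₂ : Equiv.Perm (Fin d)))
    (k x y = (k x x + k y y) / 2 ↔ ∃ σ ∈ H, x ∘ ⇑σ = y) := by
  intro k₀ k
  have hH : (0 : ℝ) < Fintype.card H := by exact_mod_cast Fintype.card_pos
  have hk : ∀ u v, k u v = ∑ T : Finset (Fin d),
      Φ #T / (Fintype.card H : ℝ) ^ 2 * walshOrbitSum H T u * walshOrbitSum H T v := by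
    intro u v
    simp only [k, k₀, walshOrbitSum, mul_sum, sum_mul]
    refine (sum_congr rfl fun σ₁ _ => sum_comm).trans (sum_comm.trans ?_)
    refine sum_congr rfl fun T _ => sum_comm.trans ?_
    exact sum_congr rfl fun σ₂ _ => sum_congr rfl fun σ₁ _ => by ring
  have hweight (T : Finset (Fin d)) : 0 < Φ #T / (Fintype.card H : ℝ) ^ 2 :=
    div_pos (hΦ _ ((card_le_univ T).trans_eq (Fintype.card_fin d))) (by positivity)
  rw [hk, hk, hk, sum_mul_mul_eq_half_add_iff hweight, walshOrbitSum_eq_iff]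

/-- For the `H`-invariant version `k` of a `Φ`-kernel `k₀` with strictly
positive coefficients `Φ_0, …, Φ_d`, the equality
`k(x, y) = (k(x, x) + k(y, y))/2` holds iff `x` and `y` are `H`-equivalent,
i.e. some `σ ∈ H` maps `x` to `y` by permuting coordinates. -/
theorem stmt15 (d : ℕ) (hd : 1 ≤ d) (Φ : ℕ → ℝ) (hΦ : ∀ j ≤ d, 0 < Φ j)
    (H : Subgroup (Equiv.Perm (Fin d))) (x y : Fin d → ZMod 2) :
    let k₀ : (Fin d → ZMod 2) → (Fin d → ZMod 2) → ℝ := fun x y =>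
      ∑ T : Finset (Fin d), Φ T.card * walsh T x * walsh T y
    let k : (Fin d → ZMod 2) → (Fin d → ZMod 2) → ℝ := fun x y =>
      (1 / (Fintype.card H : ℝ) ^ 2) *
        ∑ σ₁ : H, ∑ σ₂ : H,
          k₀ (x ∘ ⇑(σ₁ : Equiv.Perm (Fin d))) (y ∘ ⇑(σ₂ : Equiv.Perm (Fin d)))
    (k x y = (k x x + k y y) / 2 ↔ ∃ σ ∈ H, x ∘ ⇑σ = y) :=
  stmt15_general d Φ hΦ H x y
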